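/- Let A and B be n × n real matrices and t ∈ ℝ. Then the Lie–Trotter product formula holds: the sequence (exp((t/n)A) · exp((t/n)B))^n converges to exp(t(A+B)) as n → ∞. -/

import Mathlib

open NormedSpace

section aux
variable {𝔸 : Type*} [NormedRing 𝔸] [NormedAlgebra ℝ 𝔸] [CompleteSpace 𝔸] [NormOneClass 𝔸]

theorem my_norm_term_le (x : 𝔸) (n : ℕ) :
    ‖((n.factorial : ℝ))⁻¹ • x ^ n‖ ≤ ‖x‖ ^ n / n.factorial := by
  rw [norm_smul, norm_inv, Real.norm_natCast, div_eq_inv_mul]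
  exact mul_le_mul_of_nonneg_left (norm_pow_le x n) (by positivity)

theorem my_summable (x : 𝔸) : Summable fun n : ℕ => ‖x‖ ^ n / n.factorial :=
  Real.summable_pow_div_factorial ‖x‖

theorem my_exp_real (y : ℝ) : Real.exp y = ∑' n : ℕ, y ^ n / n.factorial := by
  rw [Real.exp_eq_exp_ℝ, exp_eq_tsum_div]

theorem my_norm_exp_le (x : 𝔸) : ‖exp x‖ ≤ Real.exp ‖x‖ := by
  rw [exp_eq_tsum ℝ, my_exp_real]
  refine (norm_tsum_le_tsum_norm ?_).trans (Summable.tsum_le_tsum (my_norm_term_le x) ?_ (my_summable x))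
  · exact (my_summable x).of_nonneg_of_le (fun n => norm_nonneg _) (my_norm_term_le x)
  · exact (my_summable x).of_nonneg_of_le (fun n => norm_nonneg _) (my_norm_term_le x)

theorem my_exp_taylor2 (x : 𝔸) : ‖exp x - 1 - x‖ ≤ ‖x‖ ^ 2 * Real.exp ‖x‖ := by
  have hsum : Summable fun n : ℕ => ((n.factorial : ℝ))⁻¹ • x ^ n :=
    expSeries_summable' (𝕂 := ℝ) x
  have h0 : exp x = 1 + x + ∑' n : ℕ, (((n + 2).factorial : ℝ))⁻¹ • x ^ (n + 2) := by
    simp only [exp_eq_tsum ℝ]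
    rw [Summable.tsum_eq_zero_add hsum, Summable.tsum_eq_zero_add ((summable_nat_add_iff 1).2 hsum)]
    simp [add_assoc]
  have hterm : ∀ n : ℕ, ‖x‖ ^ (n + 2) / ((n + 2).factorial : ℝ)
      ≤ ‖x‖ ^ 2 * (‖x‖ ^ n / n.factorial) := by
    intro n
    rw [pow_add, mul_comm (‖x‖ ^ n), mul_div_assoc]
    gcongr
    omega
  have hterm' : ∀ n : ℕ, ‖(((n + 2).factorial : ℝ))⁻¹ • x ^ (n + 2)‖
      ≤ ‖x‖ ^ 2 * (‖x‖ ^ n / n.factorial) :=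
    fun n => (my_norm_term_le x (n + 2)).trans (hterm n)
  have hsum2 : Summable fun n : ℕ => ‖x‖ ^ 2 * (‖x‖ ^ n / n.factorial) :=
    (my_summable x).mul_left _
  have h1 : exp x - 1 - x = ∑' n : ℕ, (((n + 2).factorial : ℝ))⁻¹ • x ^ (n + 2) := by
    rw [h0]; abel
  rw [h1]
  calc ‖∑' n : ℕ, (((n + 2).factorial : ℝ))⁻¹ • x ^ (n + 2)‖
      ≤ ∑' n : ℕ, ‖(((n + 2).factorial : ℝ))⁻¹ • x ^ (n + 2)‖ :=
        norm_tsum_le_tsum_norm (hsum2.of_nonneg_of_le (fun n => norm_nonneg _) hterm')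
    _ ≤ ∑' n : ℕ, ‖x‖ ^ 2 * (‖x‖ ^ n / n.factorial) :=
        Summable.tsum_le_tsum hterm' (hsum2.of_nonneg_of_le (fun n => norm_nonneg _) hterm') hsum2
    _ = ‖x‖ ^ 2 * Real.exp ‖x‖ := by rw [tsum_mul_left, my_exp_real]

theorem my_pow_sub_pow (x y : 𝔸) (M : ℝ) (h1 : ‖x‖ ≤ M) (h2 : ‖y‖ ≤ M) (hM : 1 ≤ M) (n : ℕ) :
    ‖x ^ n - y ^ n‖ ≤ n * M ^ n * ‖x - y‖ := by
  induction n with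
  | zero => simp
  | succ m ih =>
    have hM0 : (0:ℝ) ≤ M := zero_le_one.trans hM
    have key : x ^ (m + 1) - y ^ (m + 1) = x ^ m * (x - y) + (x ^ m - y ^ m) * y := by
      noncomm_ring
    rw [key]
    have hx : ‖x ^ m‖ ≤ M ^ m := (norm_pow_le x m).trans (pow_le_pow_left₀ (norm_nonneg _) h1 m)
    have hMM : M ^ m ≤ M ^ (m + 1) := pow_le_pow_right₀ hM (by omega)
    calc ‖x ^ m * (x - y) + (x ^ m - y ^ m) * y‖
        ≤ ‖x ^ m * (x - y)‖ + ‖(x ^ m - y ^ m) * y‖ := norm_add_le _ _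
      _ ≤ M ^ m * ‖x - y‖ + (m * M ^ m * ‖x - y‖) * M := by
          refine add_le_add ((norm_mul_le _ _).trans ?_) ((norm_mul_le _ _).trans ?_)
          · exact mul_le_mul_of_nonneg_right hx (norm_nonneg _)
          · exact mul_le_mul ih h2 (norm_nonneg _) (by positivity)
      _ ≤ (↑(m + 1) : ℝ) * M ^ (m + 1) * ‖x - y‖ := by
          have e1 : M ^ m * ‖x - y‖ ≤ M ^ (m + 1) * ‖x - y‖ :=
            mul_le_mul_of_nonneg_right hMM (norm_nonneg _)
          have e2 : (m : ℝ) * M ^ m * ‖x - y‖ * M ≤ (m : ℝ) * M ^ (m + 1) * ‖x - y‖ := by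
            have : (m : ℝ) * M ^ m * ‖x - y‖ * M = (m : ℝ) * (M ^ m * M) * ‖x - y‖ := by ring
            rw [this, ← pow_succ]
          push_cast
          linarith
end aux

section main
variable {𝔸 : Type*} [NormedRing 𝔸] [NormedAlgebra ℝ 𝔸] [CompleteSpace 𝔸] [NormOneClass 𝔸]

theorem my_trotter (A B : 𝔸) (t : ℝ) :
    Filter.Tendsto
      (fun n : ℕ => (exp ((t / n) • A) * exp ((t / n) • B)) ^ n)
      Filter.atTop (nhds (exp (t • (A + B)))) := by
  set r : ℝ := |t| * (‖A‖ + ‖B‖) with hr_def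
  have hr0 : 0 ≤ r := by positivity
  set C : ℝ := Real.exp r * Real.exp r + (1 + r) * Real.exp r + 1 + Real.exp r with hC_def
  have hC0 : 0 ≤ C := by positivity
  set K : ℝ := Real.exp r * C * r ^ 2 with hK_def
  rw [tendsto_iff_norm_sub_tendsto_zero]
  apply squeeze_zero' (Filter.Eventually.of_forall fun n => norm_nonneg _)
    (g := fun n : ℕ => K / n) _ (tendsto_const_div_atTop_nhds_zero_nat K)
  filter_upwards [Filter.eventually_ge_atTop 1] with n hn
  have hn0 : (0:ℝ) < n := by exact_mod_cast hn
  have hn0' : (n:ℝ) ≠ 0 := ne_of_gt hn0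
  set a : 𝔸 := (t / n) • A with ha_def
  set b : 𝔸 := (t / n) • B with hb_def
  set s : ℝ := r / n with hs_def
  have hs0 : 0 ≤ s := by positivity
  have hsr : s ≤ r := by
    rw [hs_def, div_le_iff₀ hn0]
    have hn1 : (1:ℝ) ≤ n := by exact_mod_cast hn
    nlinarith
  have habs : |t / (n:ℝ)| = |t| / n := by
    rw [abs_div, Nat.abs_cast]
  have hna : ‖a‖ = |t| / n * ‖A‖ := by rw [ha_def, norm_smul, Real.norm_eq_abs, habs]
  have hnb : ‖b‖ = |t| / n * ‖B‖ := by rw [hb_def, norm_smul, Real.norm_eq_abs, habs]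
  have hab_sum : ‖a‖ + ‖b‖ = s := by rw [hna, hnb, hs_def, hr_def]; ring
  have hA0 : (0:ℝ) ≤ |t| / n * ‖A‖ := by positivity
  have hB0 : (0:ℝ) ≤ |t| / n * ‖B‖ := by positivity
  have hna' : ‖a‖ ≤ s := by rw [← hab_sum]; linarith [norm_nonneg b]
  have hnb' : ‖b‖ ≤ s := by rw [← hab_sum]; linarith [norm_nonneg a]
  have hnab : ‖a + b‖ ≤ s := (norm_add_le a b).trans_eq hab_sum
  -- second order bounds
  have taylor : ∀ x : 𝔸, ‖x‖ ≤ s → ‖exp x - 1 - x‖ ≤ s ^ 2 * Real.exp r := by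
    intro x hx
    refine (my_exp_taylor2 x).trans ?_
    gcongr
    exact hx.trans hsr
  have expb : ‖exp b‖ ≤ Real.exp r :=
    (my_norm_exp_le b).trans (Real.exp_le_exp.2 (hnb'.trans hsr))
  -- the key decomposition
  set P : 𝔸 := exp a
  set Q : 𝔸 := exp b
  set R : 𝔸 := exp (a + b)
  have hdecomp : P * Q - R
      = (P - 1 - a) * Q + (1 + a) * (Q - 1 - b) + a * b - (R - 1 - (a + b)) := by
    noncomm_ring
  have hE : ‖P * Q - R‖ ≤ s ^ 2 * C := by
    rw [hdecomp]
    have e1 : ‖(P - 1 - a) * Q‖ ≤ s ^ 2 * Real.exp r * Real.exp r :=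
      (norm_mul_le _ _).trans (mul_le_mul (taylor a hna') expb (norm_nonneg _) (by positivity))
    have e2 : ‖(1 + a) * (Q - 1 - b)‖ ≤ (1 + r) * (s ^ 2 * Real.exp r) := by
      refine (norm_mul_le _ _).trans (mul_le_mul ?_ (taylor b hnb') (norm_nonneg _) (by linarith))
      calc ‖(1:𝔸) + a‖ ≤ ‖(1:𝔸)‖ + ‖a‖ := norm_add_le _ _
        _ = 1 + ‖a‖ := by rw [norm_one]
        _ ≤ 1 + r := by linarith [hna'.trans hsr]
    have e3 : ‖a * b‖ ≤ s ^ 2 := by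
      refine (norm_mul_le _ _).trans ?_
      calc ‖a‖ * ‖b‖ ≤ s * s := mul_le_mul hna' hnb' (norm_nonneg _) hs0
        _ = s ^ 2 := (sq s).symm
    have e4 : ‖R - 1 - (a + b)‖ ≤ s ^ 2 * Real.exp r := taylor _ hnab
    calc ‖(P - 1 - a) * Q + (1 + a) * (Q - 1 - b) + a * b - (R - 1 - (a + b))‖
        ≤ ‖(P - 1 - a) * Q‖ + ‖(1 + a) * (Q - 1 - b)‖ + ‖a * b‖ + ‖R - 1 - (a + b)‖ := by
          refine (norm_sub_le _ _).trans ?_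
          gcongr
          exact (norm_add_le _ _).trans (by gcongr; exact norm_add_le _ _)
      _ ≤ s ^ 2 * Real.exp r * Real.exp r + (1 + r) * (s ^ 2 * Real.exp r) + s ^ 2
          + s ^ 2 * Real.exp r := by linarith
      _ = s ^ 2 * C := by rw [hC_def]; ring
  -- norms of the factors
  have hSnorm : ‖P * Q‖ ≤ Real.exp s := by
    refine (norm_mul_le _ _).trans ?_
    calc ‖P‖ * ‖Q‖ ≤ Real.exp ‖a‖ * Real.exp ‖b‖ :=
          mul_le_mul (my_norm_exp_le a) (my_norm_exp_le b) (norm_nonneg _) (Real.exp_nonneg _)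
      _ = Real.exp (‖a‖ + ‖b‖) := (Real.exp_add _ _).symm
      _ = Real.exp s := by rw [hab_sum]
  have hTnorm : ‖R‖ ≤ Real.exp s :=
    (my_norm_exp_le _).trans (Real.exp_le_exp.2 hnab)
  have hM1 : 1 ≤ Real.exp s := Real.one_le_exp hs0
  -- identify the limit as R ^ n
  have hab_eq : a + b = (t / n) • (A + B) := by rw [ha_def, hb_def, smul_add]
  have hRpow : R ^ n = exp (t • (A + B)) := by
    let +nondep : NormedAlgebra ℚ 𝔸 := .restrictScalars ℚ ℝ 𝔸
    rw [← exp_nsmul, hab_eq, ← Nat.cast_smul_eq_nsmul ℝ, smul_smul,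
      mul_div_cancel₀ t hn0']
  have hMn : Real.exp s ^ n = Real.exp r := by
    rw [← Real.exp_nat_mul, hs_def, mul_div_cancel₀ r hn0']
  -- conclude
  rw [← hRpow]
  calc ‖(P * Q) ^ n - R ^ n‖ ≤ n * Real.exp s ^ n * ‖P * Q - R‖ :=
        my_pow_sub_pow _ _ _ hSnorm hTnorm hM1 n
    _ ≤ n * Real.exp r * (s ^ 2 * C) := by
        rw [hMn]
        exact mul_le_mul_of_nonneg_left hE (by positivity)
    _ = K / n := by
        rw [hK_def, hs_def]
        field_simp

end main

attribute [local instance] Matrix.linftyOpNormedRing Matrix.linftyOpNormedAlgebra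

/-- Lie–Trotter product formula for `n × n` real matrices: for every `t ∈ ℝ`,
`(exp((t/n)A)·exp((t/n)B))^n → exp(t(A+B))` as `n → ∞`. -/
theorem lie_trotter_product_formula (d : ℕ) (A B : Matrix (Fin d) (Fin d) ℝ) (t : ℝ) :
    Filter.Tendsto
      (fun n : ℕ => (exp ((t / n) • A) * exp ((t / n) • B)) ^ n)
      Filter.atTop (nhds (exp (t • (A + B)))) := by
  rcases Nat.eq_zero_or_pos d with hd | hd
  · subst hd
    have h : ∀ x y : Matrix (Fin 0) (Fin 0) ℝ, x = y := fun x y => by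
      ext i j; exact i.elim0
    exact Filter.Tendsto.congr (fun n => h _ _) tendsto_const_nhds
  · haveI : Nonempty (Fin d) := ⟨⟨0, hd⟩⟩
    exact my_trotter A B t
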